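/- Let n ≥ 2 and c = (c_1,…,c_n) ∈ ℂ^n. Then the operator F(c) on V^{⊗n} satisfies F(c) = ∏_{1≤i<j≤n}^{←} R_{i,j}(c_i−c_j), i.e., the product of the factors R_{i,j}(c_i−c_j) over all pairs i < j taken in the reverse lexicographic order of (i,j) (so that the factor with (i,j)=(1,2) is the rightmost one) equals the same product taken in lexicographic order. -/

import Mathlib

/-!
We model the finite-dimensional complex vector space `V` as `ℂ^N` (i.e. `Fin N → ℂ`),
so that `V^{⊗ n}` is `(Fin n → Fin N) → ℂ` and endomorphisms of `V^{⊗ n}` are matrices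
indexed by multi-indices `Fin n → Fin N`.
-/

open scoped BigOperators

noncomputable section

/-- Endomorphisms of `V ⊗ V` for `V = ℂ^N`. -/
abbrev End2 (N : ℕ) := Matrix (Fin N × Fin N) (Fin N × Fin N) ℂ

/-- Endomorphisms of `V^{⊗ n}` for `V = ℂ^N`. -/
abbrev EndT (N n : ℕ) := Matrix (Fin n → Fin N) (Fin n → Fin N) ℂ

/-- `X_{a,b}` : the endomorphism `X` of `V ⊗ V` applied to the tensor factors `a` and `b`
(in that order) of `V^{⊗ n}`, and the identity on all other factors. -/
def op2 (N n : ℕ) (X : End2 N) (a b : Fin n) : EndT N n :=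
  fun f g => X (f a, f b) (g a, g b) *
    ∏ i : Fin n, if i ≠ a ∧ i ≠ b then (if f i = g i then (1 : ℂ) else 0) else 1

/-- The flip (permutation) operator `P : x ⊗ y ↦ y ⊗ x` on `V ⊗ V`. -/
def flipMat (N : ℕ) : End2 N := fun p q => if p.1 = q.2 ∧ p.2 = q.1 then 1 else 0

/-- `R` is a solution of the Yang--Baxter equation (with additive spectral parameters)
on `V ⊗ V ⊗ V`:  `R₁₂(u) R₁₃(u+v) R₂₃(v) = R₂₃(v) R₁₃(u+v) R₁₂(u)`. -/
def YangBaxter (N : ℕ) (R : ℂ → End2 N) : Prop :=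
  ∀ u v : ℂ,
    op2 N 3 (R u) 0 1 * op2 N 3 (R (u + v)) 0 2 * op2 N 3 (R v) 1 2 =
    op2 N 3 (R v) 1 2 * op2 N 3 (R (u + v)) 0 2 * op2 N 3 (R u) 0 1

/-- The fused operator `R_{c,c'}(u)`, acting on `V^{⊗ m}`, where the `n` factors of the first
block are embedded via `a` and the `n'` factors of the second block via `b`:
`R_{c,c'}(u) = ∏→_{i=1..n'} [ R_{n,i'}(u+c_n−c'_i) ⋯ R_{2,i'}(u+c_2−c'_i) R_{1,i'}(u+c_1−c'_i) ]`. -/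
def fusedOp (N : ℕ) (R : ℂ → End2 N) {m n n' : ℕ} (a : Fin n → Fin m) (b : Fin n' → Fin m)
    (c : Fin n → ℂ) (c' : Fin n' → ℂ) (u : ℂ) : EndT N m :=
  ((List.finRange n').map fun i =>
    (((List.finRange n).reverse).map fun k =>
      op2 N m (R (u + c k - c' i)) (a k) (b i)).prod).prod

/-- The list of pairs `(i,j)` with `i < j`, in lexicographic order. -/
def lexPairs (n : ℕ) : List (Fin n × Fin n) :=
  (List.finRange n).flatMap fun i =>
    ((List.finRange n).filter fun j => decide (i < j)).map fun j => (i, j)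

/-- The operator `F(c) = ∏→_{1 ≤ i < j ≤ n} R_{i,j}(c_i − c_j)` on `V^{⊗ n}`
(product over the pairs `i < j` in lexicographic order). -/
def Fop (N : ℕ) (R : ℂ → End2 N) {n : ℕ} (c : Fin n → ℂ) : EndT N n :=
  ((lexPairs n).map fun p => op2 N n (R (c p.1 - c p.2)) p.1 p.2).prod

/-- The endomorphism of `V^{⊗ n}` embedded into `V^{⊗ m}`, acting on the factors listed
by `e` and identically on all other factors. -/
def opBlock (N : ℕ) {m n : ℕ} (e : Fin n → Fin m) (X : EndT N n) : EndT N m :=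
  fun f g => X (f ∘ e) (g ∘ e) *
    ∏ i : Fin m, if ∀ k, e k ≠ i then (if f i = g i then (1 : ℂ) else 0) else 1

/-- The operator `P_π` on `V^{⊗ n}` permuting the tensor factors:
`P_π (x_1 ⊗ ⋯ ⊗ x_n) = x_{π(1)} ⊗ ⋯ ⊗ x_{π(n)}`. -/
def permMat (N n : ℕ) (π : Equiv.Perm (Fin n)) : EndT N n :=
  fun f g => if f = g ∘ π then 1 else 0

/-- The tensor product of a vector of `V^{⊗ n}` and a vector of `V^{⊗ n'}`,
as a vector of `V^{⊗ (n+n')}`. -/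
def tensVec (N : ℕ) {n n' : ℕ} (x : (Fin n → Fin N) → ℂ) (y : (Fin n' → Fin N) → ℂ) :
    (Fin (n + n') → Fin N) → ℂ :=
  fun f => x (fun i => f (Fin.castAdd n' i)) * y (fun j => f (Fin.natAdd n j))

end


/-!
Write `P(s)` for the lexicographically ordered product of the factors `f i j = R_{i,j}(c_i − c_j)`
over pairs from a list `s`, so that `P(x :: t) = (∏_{j ∈ t} f x j) · P(t)`. Peeling off the same
row on the other side of the reversed product, the claim follows by induction once the row of `x`
can be moved through `P(t)`, coming out in reverse order. Moving it past one further row of `y` is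
the exchange `f x y · row_x · row_y = row_y · row_x · f x y`, which is the Yang–Baxter equation
applied factor by factor, together with the commutation of operators acting on disjoint tensor
legs. The Yang–Baxter equation on arbitrary legs `a, b, c` of `V^{⊗n}` is transported from `V^{⊗3}`
along the embedding `opBlock`, which is multiplicative.
-/

namespace List

variable {α : Type*}

def orderedPairs : List α → List (α × α)
  | [] => []
  | x :: t => t.map (x, ·) ++ orderedPairs t

lemma mem_orderedPairs {s : List α} {p : α × α} (hp : p ∈ orderedPairs s) :
    p.1 ∈ s ∧ p.2 ∈ s := by
  induction s with
  | nil => simp [orderedPairs] at hp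
  | cons x t ih =>
    simp only [orderedPairs, mem_append, mem_map] at hp
    rcases hp with ⟨j, hj, rfl⟩ | hp
    · exact ⟨mem_cons_self, mem_cons_of_mem _ hj⟩
    · exact ⟨mem_cons_of_mem _ (ih hp).1, mem_cons_of_mem _ (ih hp).2⟩

lemma orderedPairs_eq_flatMap_filter [LinearOrder α] {s : List α} (hs : s.Pairwise (· < ·)) :
    orderedPairs s = s.flatMap fun i => (s.filter fun j => decide (i < j)).map (i, ·) := by
  induction s with
  | nil => rfl
  | cons x t ih =>
    obtain ⟨hx, ht⟩ := pairwise_cons.mp hs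
    have hrow : ((x :: t).filter fun j => decide (x < j)) = t := by
      simpa using filter_eq_self.mpr fun y hy => decide_eq_true (hx y hy)
    have hrows : ∀ i ∈ t, ((x :: t).filter fun j => decide (i < j)).map (i, ·) =
        (t.filter fun j => decide (i < j)).map (i, ·) :=
      fun i hi => by simp [(hx i hi).not_gt]
    rw [flatMap_cons, hrow, flatMap_congr hrows, ← ih ht]
    rfl

end List

section YangBaxterProducts

open List Function

variable {α M : Type*} [Monoid M] {f : α → α → M}
  (hcomm : ∀ a b c d, a ≠ c → a ≠ d → b ≠ c → b ≠ d → Commute (f a b) (f c d))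
  (hybe : ∀ a b c, a ≠ b → a ≠ c → b ≠ c → f a b * f a c * f b c = f b c * f a c * f a b)

include hcomm

lemma commute_prod_map_of_notMem {x c d : α} {s : List α} (hxc : x ≠ c) (hxd : x ≠ d)
    (hc : c ∉ s) (hd : d ∉ s) : Commute (f c d) (s.map (f x)).prod :=
  Commute.list_prod_right _ _ fun _ hy => by
    obtain ⟨z, hz, rfl⟩ := mem_map.mp hy
    exact hcomm c d x z hxc.symm (ne_of_mem_of_not_mem hz hc).symm hxd.symm
      (ne_of_mem_of_not_mem hz hd).symm

lemma commute_prod_map_orderedPairs {x y : α} {s : List α} (hx : x ∉ s) (hy : y ∉ s) :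
    Commute (f x y) ((orderedPairs s).map (uncurry f)).prod :=
  Commute.list_prod_right _ _ fun _ hq => by
    obtain ⟨p, hp, rfl⟩ := mem_map.mp hq
    obtain ⟨h1, h2⟩ := mem_orderedPairs hp
    exact hcomm x y p.1 p.2 (ne_of_mem_of_not_mem h1 hx).symm (ne_of_mem_of_not_mem h2 hx).symm
      (ne_of_mem_of_not_mem h1 hy).symm (ne_of_mem_of_not_mem h2 hy).symm

include hybe

lemma yangBaxter_rows {x y : α} (hxy : x ≠ y) {s : List α} (hs : s.Nodup) (hx : x ∉ s)
    (hy : y ∉ s) :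
    f x y * ((s.map (f x)).prod * (s.map (f y)).prod) =
      (s.map (f y)).prod * ((s.map (f x)).prod * f x y) := by
  induction s with
  | nil => simp
  | cons z s ih =>
    obtain ⟨hzs, hs⟩ := nodup_cons.mp hs
    obtain ⟨hxz, hxs⟩ := not_or.mp (mem_cons.not.mp hx)
    obtain ⟨hyz, hys⟩ := not_or.mp (mem_cons.not.mp hy)
    have hyz_x : Commute (f y z) (s.map (f x)).prod :=
      commute_prod_map_of_notMem hcomm hxy hxz hys hzs
    have hxz_y : Commute (f x z) (s.map (f y)).prod :=
      commute_prod_map_of_notMem hcomm hxy.symm hyz hxs hzs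
    simp only [map_cons, prod_cons]
    calc f x y * (f x z * (s.map (f x)).prod * (f y z * (s.map (f y)).prod))
        = f x y * f x z * f y z * ((s.map (f x)).prod * (s.map (f y)).prod) := by
          simp only [mul_assoc, hyz_x.symm.left_comm]
      _ = f y z * f x z * (f x y * ((s.map (f x)).prod * (s.map (f y)).prod)) := by
          rw [hybe x y z hxy hxz hyz]; simp only [mul_assoc]
      _ = f y z * (s.map (f y)).prod * (f x z * (s.map (f x)).prod * f x y) := by
          rw [ih hs hxs hys]; simp only [mul_assoc, hxz_y.left_comm]

lemma prod_map_mul_prod_orderedPairs {x : α} {s : List α} (hs : s.Nodup) (hx : x ∉ s) :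
    (s.map (f x)).prod * ((orderedPairs s).map (uncurry f)).prod =
      ((orderedPairs s).map (uncurry f)).prod * (s.reverse.map (f x)).prod := by
  induction s with
  | nil => simp
  | cons y s ih =>
    obtain ⟨hys, hs⟩ := nodup_cons.mp hs
    obtain ⟨hxy, hxs⟩ := not_or.mp (mem_cons.not.mp hx)
    set P := ((orderedPairs s).map (uncurry f)).prod
    have hP : ((orderedPairs (y :: s)).map (uncurry f)).prod = (s.map (f y)).prod * P := by
      simp [orderedPairs, P, map_map, uncurry, comp_def]
    rw [hP, reverse_cons, map_append, prod_append, map_singleton, prod_singleton]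
    calc (map (f x) (y :: s)).prod * ((s.map (f y)).prod * P)
        = (s.map (f y)).prod * ((s.map (f x)).prod * f x y) * P := by
          rw [← yangBaxter_rows hcomm hybe hxy hs hxs hys]
          simp only [map_cons, prod_cons, mul_assoc]
      _ = (s.map (f y)).prod * ((s.map (f x)).prod * P) * f x y := by
          simp only [mul_assoc]; rw [(commute_prod_map_orderedPairs hcomm hxs hys).eq]
      _ = (s.map (f y)).prod * P * ((s.reverse.map (f x)).prod * f x y) := by
          rw [ih hs hxs]; simp only [mul_assoc]

theorem prod_orderedPairs_reverse {s : List α} (hs : s.Nodup) :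
    ((orderedPairs s).reverse.map (uncurry f)).prod = ((orderedPairs s).map (uncurry f)).prod := by
  induction s with
  | nil => rfl
  | cons x s ih =>
    obtain ⟨hxs, hs⟩ := nodup_cons.mp hs
    rw [orderedPairs, reverse_append, map_append, prod_append, ih hs, ← map_reverse,
      map_append, prod_append]
    simp only [map_map]
    exact (prod_map_mul_prod_orderedPairs hcomm hybe hs hxs).symm

end YangBaxterProducts

lemma Fintype.prod_ite_imp_boole {ι M₀ : Type*} [Fintype ι] [CommMonoidWithZero M₀]
    (p q : ι → Prop) [DecidablePred p] [DecidablePred q] :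
    (∏ i, if p i then (if q i then (1 : M₀) else 0) else 1) = if ∀ i, p i → q i then 1 else 0 := by
  rw [← Fintype.prod_boole]
  exact Finset.prod_congr rfl fun i _ => by by_cases p i <;> simp [*]

lemma Fintype.sum_agree_off_range {ι κ β R : Type*} [Fintype ι] [DecidableEq ι] [Fintype κ]
    [DecidableEq κ] [Fintype β] [AddCommMonoid R] {e : κ → ι} (he : e.Injective)
    (f : ι → β) (φ : (κ → β) → R) [DecidablePred fun h : ι → β => ∀ i, (∀ k, e k ≠ i) → f i = h i] :
    ∑ h : ι → β, (if ∀ i, (∀ k, e k ≠ i) → f i = h i then φ (h ∘ e) else 0) = ∑ k, φ k := by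
  rw [← Finset.sum_filter]
  refine Finset.sum_nbij' (· ∘ e) (fun k => Function.extend e k f) (by simp) ?_ ?_ ?_
    (fun _ _ => rfl)
  · intro k _
    simp only [Finset.mem_filter, Finset.mem_univ, true_and]
    exact fun i hi => (Function.extend_apply' _ _ _ fun ⟨k, hk⟩ => hi k hk).symm
  · intro h hh
    simp only [Finset.mem_filter, Finset.mem_univ, true_and] at hh
    funext i
    by_cases hi : ∃ k, e k = i
    · obtain ⟨k, rfl⟩ := hi
      exact he.extend_apply _ _ _
    · rw [Function.extend_apply' _ _ _ hi]
      exact hh i fun k hk => hi ⟨k, hk⟩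
  · intro k _
    funext a
    exact he.extend_apply _ _ _

section TensorOperators

variable {N n m : ℕ}

lemma op2_apply (X : End2 N) (a b : Fin n) (f g : Fin n → Fin N) :
    op2 N n X a b f g = X (f a, f b) (g a, g b) *
      if ∀ i, i ≠ a → i ≠ b → f i = g i then 1 else 0 := by
  simp only [op2, Fintype.prod_ite_imp_boole, and_imp]

lemma op2_mul_op2_apply {a b c d : Fin n} (hac : a ≠ c) (had : a ≠ d) (hbc : b ≠ c)
    (hbd : b ≠ d) (X Y : End2 N) (f g : Fin n → Fin N) :
    (op2 N n X a b * op2 N n Y c d) f g = X (f a, f b) (g a, g b) * Y (f c, f d) (g c, g d) *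
      if ∀ i, i ≠ a → i ≠ b → i ≠ c → i ≠ d → f i = g i then 1 else 0 := by
  -- the only intermediate multi-index contributing to the matrix product
  let h₀ : Fin n → Fin N := fun i => if i = a ∨ i = b then g i else f i
  have hf : ∀ i, i ≠ a → i ≠ b → h₀ i = f i := fun i hia hib => if_neg (by tauto)
  have hg : ∀ i, i = a ∨ i = b → h₀ i = g i := fun i hi => if_pos hi
  rw [Matrix.mul_apply, Fintype.sum_eq_single h₀]
  · have hleft : ∀ i, i ≠ a → i ≠ b → f i = h₀ i := fun i hia hib => (hf i hia hib).symm
    have hright : (∀ i, i ≠ c → i ≠ d → h₀ i = g i) ↔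
        ∀ i, i ≠ a → i ≠ b → i ≠ c → i ≠ d → f i = g i := by
      refine forall_congr' fun i => ?_
      by_cases hi : i = a ∨ i = b
      · simp only [hg i hi]; tauto
      · simp only [hf i (by tauto) (by tauto)]; tauto
    rw [op2_apply, op2_apply, if_pos hleft, if_congr hright rfl rfl, hg a (.inl rfl),
      hg b (.inr rfl), hf c hac.symm hbc.symm, hf d had.symm hbd.symm]
    ring
  · intro h hh₀
    rw [op2_apply, op2_apply]
    by_cases hleft : ∀ i, i ≠ a → i ≠ b → f i = h i
    · by_cases hright : ∀ i, i ≠ c → i ≠ d → h i = g i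
      · refine absurd (funext fun i => ?_) hh₀
        by_cases hi : i = a ∨ i = b
        · rw [hg i hi]
          rcases hi with rfl | rfl
          exacts [hright _ hac had, hright _ hbc hbd]
        · rw [hf i (by tauto) (by tauto)]
          exact (hleft i (by tauto) (by tauto)).symm
      · simp [hright]
    · simp [hleft]

lemma op2_commute {a b c d : Fin n} (hac : a ≠ c) (had : a ≠ d) (hbc : b ≠ c) (hbd : b ≠ d)
    (X Y : End2 N) : Commute (op2 N n X a b) (op2 N n Y c d) := by
  ext f g
  rw [op2_mul_op2_apply hac had hbc hbd, op2_mul_op2_apply hac.symm hbc.symm had.symm hbd.symm,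
    mul_comm (Y _ _)]
  congr 1
  exact if_congr (forall_congr' fun _ => by tauto) rfl rfl

lemma opBlock_apply (e : Fin n → Fin m) (X : EndT N n) (f g : Fin m → Fin N) :
    opBlock N e X f g = X (f ∘ e) (g ∘ e) *
      if ∀ i, (∀ k, e k ≠ i) → f i = g i then 1 else 0 := by
  simp only [opBlock, Fintype.prod_ite_imp_boole]
  congr

lemma opBlock_mul {e : Fin n → Fin m} (he : e.Injective) (X Y : EndT N n) :
    opBlock N e (X * Y) = opBlock N e X * opBlock N e Y := by
  ext f g
  let Off : (Fin m → Fin N) → (Fin m → Fin N) → Prop := fun h h' => ∀ i, (∀ k, e k ≠ i) → h i = h' i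
  have hterm : ∀ h, opBlock N e X f h * opBlock N e Y h g =
      if Off f h then X (f ∘ e) (h ∘ e) * Y (h ∘ e) (g ∘ e) * (if Off f g then 1 else 0)
      else 0 := by
    intro h
    rw [opBlock_apply, opBlock_apply]
    by_cases hfh : Off f h
    · have hhg : Off h g ↔ Off f g :=
        forall_congr' fun i => imp_congr_right fun hi => by rw [hfh i hi]
      rw [if_pos hfh, if_pos hfh, if_congr hhg rfl rfl]
      ring
    · rw [if_neg hfh, if_neg hfh]
      ring
  rw [Matrix.mul_apply, Finset.sum_congr rfl fun h _ => hterm h, opBlock_apply,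
    Matrix.mul_apply, Finset.sum_mul]
  exact (Fintype.sum_agree_off_range he f _).symm

lemma opBlock_op2 {e : Fin n → Fin m} (he : e.Injective) (X : End2 N) (a b : Fin n) :
    opBlock N e (op2 N n X a b) = op2 N m X (e a) (e b) := by
  ext f g
  rw [opBlock_apply, op2_apply, op2_apply, mul_assoc, ite_zero_mul_ite_zero, mul_one]
  refine congrArg _ (if_congr ⟨fun ⟨hin, hout⟩ i hia hib => ?_, fun h => ⟨?_, ?_⟩⟩ rfl rfl)
  · by_cases hi : ∃ k, e k = i
    · obtain ⟨k, rfl⟩ := hi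
      exact hin k (fun h => hia (congrArg e h)) (fun h => hib (congrArg e h))
    · exact hout i fun k hk => hi ⟨k, hk⟩
  · exact fun k hka hkb => h (e k) (he.ne hka) (he.ne hkb)
  · exact fun i hi => h i (fun h => hi a h.symm) (fun h => hi b h.symm)

end TensorOperators

lemma op2_yangBaxter {N n : ℕ} {R : ℂ → End2 N} (hR : YangBaxter N R) {a b c : Fin n}
    (hab : a ≠ b) (hac : a ≠ c) (hbc : b ≠ c) (u v : ℂ) :
    op2 N n (R u) a b * op2 N n (R (u + v)) a c * op2 N n (R v) b c =
      op2 N n (R v) b c * op2 N n (R (u + v)) a c * op2 N n (R u) a b := by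
  have he : Function.Injective ![a, b, c] := by
    intro i j hij
    fin_cases i <;> fin_cases j <;> simp_all
  simpa [opBlock_mul he, opBlock_op2 he] using congrArg (opBlock N ![a, b, c]) (hR u v)

lemma lexPairs_eq_orderedPairs (n : ℕ) : lexPairs n = (List.finRange n).orderedPairs :=
  (List.orderedPairs_eq_flatMap_filter (List.pairwise_lt_finRange n)).symm

theorem Fop_reverse_lex_general
    (N : ℕ) (R : ℂ → End2 N) (hR : YangBaxter N R)
    (n : ℕ) (c : Fin n → ℂ) :
    Fop N R c =
    (((lexPairs n).reverse).map fun p => op2 N n (R (c p.1 - c p.2)) p.1 p.2).prod := by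
  let f : Fin n → Fin n → EndT N n := fun i j => op2 N n (R (c i - c j)) i j
  have hcomm : ∀ i j k l, i ≠ k → i ≠ l → j ≠ k → j ≠ l → Commute (f i j) (f k l) :=
    fun _ _ _ _ hik hil hjk hjl => op2_commute hik hil hjk hjl _ _
  have hybe : ∀ i j k, i ≠ j → i ≠ k → j ≠ k → f i j * f i k * f j k = f j k * f i k * f i j := by
    intro i j k hij hik hjk
    simpa [f] using op2_yangBaxter hR hij hik hjk (c i - c j) (c j - c k)
  rw [Fop, lexPairs_eq_orderedPairs]
  exact (prod_orderedPairs_reverse hcomm hybe (List.nodup_finRange n)).symm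

/-- The product defining `F(c)` taken in reverse lexicographic order of
the pairs `(i,j)` coincides with the product taken in lexicographic order. -/
theorem Fop_reverse_lex
    (N : ℕ) (R : ℂ → End2 N) (hR : YangBaxter N R)
    (n : ℕ) (hn : 2 ≤ n) (c : Fin n → ℂ) :
    Fop N R c =
    (((lexPairs n).reverse).map fun p => op2 N n (R (c p.1 - c p.2)) p.1 p.2).prod :=
  Fop_reverse_lex_general N R hR n c
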